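/- In the GARCH(1,1) model, the lower bound ǍVaR^α_t(L_T) := κ · ((1/(1−α)) ∫_α^1 sqrt(a₁ F_{Z²}^{-1}(y) + b) dy)^{T-t-1} · σ_{t+1}, with κ = (1/(1−α)) ∫_α^1 F_Z^{-1}(u) du, satisfies ÃVaR^α_t(L_T) ≥ ǍVaR^α_t(L_T) for all t = 0,…,T−1. -/

import Mathlib

/-!
Conditionally on `ℱ t`, the volatility `σ (t + 1)` is frozen at its current value while
`Z (t + 1)` keeps its unconditional law. Hence the conditional VaR at level `u` of a loss squeezed
between monotone continuous functions of `Z (t + 1)` (with `σ (t + 1)` as a parameter) is squeezed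
between the same functions of the `u`-quantile of `Z (t + 1)`. At the last step this gives
`ÃVaR_{T-1}(L_T) = κ σ_T` exactly. One step back, `σ_{t+2} ≥ σ_{t+1} √(a₁ Z_{t+1}² + b)` after
dropping `a₀`, so a lower bound `c σ_{t+2}` becomes `c σ_{t+1}` times the tail mean of
`√(a₁ F_{Z²}^{-1} + b)`. Because AVaR integrates VaR over levels, each step also needs an
integrable upper bound on the VaR profile: `A + B σ_{t+1}²`, propagated through
`σ_{t+2}² = a₀ + σ_{t+1}² (a₁ Z_{t+1}² + b)` and the integrability of the quantile function of `Z²`.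
-/

open MeasureTheory ProbabilityTheory Set

/-- The distribution function of a real random variable `Z` under `μ`. -/
noncomputable def distFun {Ω : Type*} [MeasurableSpace Ω] (μ : Measure Ω) (Z : Ω → ℝ) (x : ℝ) : ℝ :=
  (μ (Z ⁻¹' Set.Iic x)).toReal

/-- Left-continuous quantile function (generalized inverse) of a distribution function. -/
noncomputable def quantileFun (F : ℝ → ℝ) (α : ℝ) : ℝ :=
  sInf {x : ℝ | α ≤ F x}

/-- The conditional Value-at-Risk at level `α` given the sub-σ-algebra `𝔉`, realized pointwise
via the regular conditional distribution: `VaR^α_t(L)(ω) = inf {m : P(L ≤ m | 𝔉)(ω) ≥ α}`. -/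
noncomputable def condVaR {Ω : Type*} (𝔉 : MeasurableSpace Ω) [mΩ : MeasurableSpace Ω]
    [StandardBorelSpace Ω] [Nonempty Ω] (μ : Measure Ω) [IsFiniteMeasure μ]
    (α : ℝ) (L : Ω → ℝ) (ω : Ω) : ℝ :=
  sInf {m : ℝ | α ≤ ((condExpKernel μ 𝔉 ω) (L ⁻¹' Set.Iic m)).toReal}

open Filter Topology

section Quantile

variable (ρ : Measure ℝ) {u : ℝ}

theorem quantileFun_le_quantileFun {F F' : ℝ → ℝ} {u u' : ℝ} (hu : u ≤ u') (hF : ∀ x, F x ≤ F' x)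
    (hne : {x | u' ≤ F x}.Nonempty) (hbdd : BddBelow {x | u ≤ F' x}) :
    quantileFun F' u ≤ quantileFun F u' :=
  csInf_le_csInf hbdd hne fun _ hx => hu.trans (hx.trans (hF _))

theorem bddBelow_setOf_le_cdf (hu : 0 < u) : BddBelow {x | u ≤ cdf ρ x} := by
  obtain ⟨x₀, hx₀⟩ := eventually_atBot.1 ((tendsto_cdf_atBot ρ).eventually (gt_mem_nhds hu))
  refine ⟨x₀, fun x hx => le_of_not_gt fun hlt => ?_⟩
  exact (hx₀ x hlt.le).not_ge hx

theorem nonempty_setOf_le_cdf (hu : u < 1) : {x | u ≤ cdf ρ x}.Nonempty :=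
  ((tendsto_cdf_atTop ρ).eventually (lt_mem_nhds hu)).exists.imp fun _ => le_of_lt

theorem le_cdf_quantileFun (hu : u ∈ Ioo 0 1) : u ≤ cdf ρ (quantileFun (cdf ρ) u) := by
  refine ge_of_tendsto ((cdf ρ).right_continuous _ |>.mono Ioi_subset_Ici_self)
    (eventually_nhdsWithin_of_forall fun x hx => ?_)
  obtain ⟨y, hy, hyx⟩ := exists_lt_of_csInf_lt (nonempty_setOf_le_cdf ρ hu.2) hx
  exact hy.trans (monotone_cdf ρ hyx.le)

theorem quantileFun_le_iff (hu : u ∈ Ioo 0 1) {x : ℝ} :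
    quantileFun (cdf ρ) u ≤ x ↔ u ≤ cdf ρ x :=
  ⟨fun h => (le_cdf_quantileFun ρ hu).trans (monotone_cdf ρ h),
    fun h => csInf_le (bddBelow_setOf_le_cdf ρ hu.1) h⟩

theorem monotoneOn_quantileFun_cdf : MonotoneOn (quantileFun (cdf ρ)) (Ioo 0 1) :=
  fun _ hu _ hu' huu' => quantileFun_le_quantileFun huu' (fun _ => le_rfl)
    (nonempty_setOf_le_cdf ρ hu'.2) (bddBelow_setOf_le_cdf ρ hu.1)

theorem quantileFun_cdf_map [IsProbabilityMeasure ρ] {g : ℝ → ℝ} (hg : Monotone g)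
    (hgc : Continuous g) (hu : u ∈ Ioo 0 1) :
    quantileFun (cdf (ρ.map g)) u = g (quantileFun (cdf ρ) u) := by
  have := Measure.isProbabilityMeasure_map (μ := ρ) hgc.aemeasurable
  have hcdf : ∀ x, cdf (ρ.map g) x = ρ.real (g ⁻¹' Iic x) := fun x => by
    rw [cdf_eq_real, map_measureReal_apply hgc.measurable measurableSet_Iic]
  set q := quantileFun (cdf ρ) u
  refine le_antisymm ((quantileFun_le_iff _ hu).2 ?_) ?_
  · calc u ≤ cdf ρ q := le_cdf_quantileFun ρ hu
      _ = ρ.real (Iic q) := cdf_eq_real ρ q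
      _ ≤ _ := by rw [hcdf]; exact measureReal_mono fun y hy => hg hy
  · refine le_csInf (nonempty_setOf_le_cdf _ hu.2) fun x hx => le_of_not_gt fun hxq => ?_
    -- continuity of `g` at `q` from the left pushes the level `x` below some `g y` with `y < q`
    have hev : ∀ᶠ y in 𝓝[<] q, x < g y ∧ y < q :=
      (((hgc.tendsto q).mono_left nhdsWithin_le_nhds).eventually (lt_mem_nhds hxq)).and
        self_mem_nhdsWithin
    obtain ⟨y, hxy, hyq⟩ := hev.exists
    have : u ≤ cdf ρ y := by
      refine hx.trans ?_
      rw [hcdf, cdf_eq_real]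
      exact measureReal_mono fun z hz =>
        le_of_not_gt fun hyz => (hxy.trans_le (hg hyz.le)).not_ge hz
    exact hyq.not_ge ((quantileFun_le_iff ρ hu).2 this)

theorem quantileFun_cdf_nonneg [IsProbabilityMeasure ρ] (h : ρ (Iio 0) = 0)
    (hu : u ∈ Ioo 0 1) : 0 ≤ quantileFun (cdf ρ) u := by
  by_contra! hq
  have := (le_cdf_quantileFun ρ hu).trans ((cdf_eq_real ρ _).trans_le
    (measureReal_mono (Iic_subset_Iio.2 hq)))
  rw [measureReal_def, h, ENNReal.toReal_zero] at this
  exact hu.1.not_ge this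

theorem aemeasurable_quantileFun_cdf :
    AEMeasurable (quantileFun (cdf ρ)) (volume.restrict (Ioo 0 1)) :=
  aemeasurable_restrict_of_monotoneOn measurableSet_Ioo (monotoneOn_quantileFun_cdf ρ)

theorem map_quantileFun_cdf [IsProbabilityMeasure ρ] :
    (volume.restrict (Ioo 0 1)).map (quantileFun (cdf ρ)) = ρ := by
  refine Measure.ext_of_Iic _ _ fun x => ?_
  have hset : quantileFun (cdf ρ) ⁻¹' Iic x ∩ Ioo 0 1 = Ioo 0 1 ∩ Iic (cdf ρ x) := by
    ext u
    simp only [mem_inter_iff, mem_preimage, mem_Iic]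
    exact ⟨fun h => ⟨h.2, (quantileFun_le_iff ρ h.2).1 h.1⟩,
      fun h => ⟨(quantileFun_le_iff ρ h.1).2 h.2, h.1⟩⟩
  have hIoc : (Ioo 0 1 ∩ Iic (cdf ρ x) : Set ℝ) =ᵐ[volume] (Ioc 0 1 ∩ Iic (cdf ρ x) : Set ℝ) :=
    Ioo_ae_eq_Ioc.inter (ae_eq_refl _)
  rw [Measure.map_apply_of_aemeasurable (aemeasurable_quantileFun_cdf ρ) measurableSet_Iic,
    Measure.restrict_apply' measurableSet_Ioo, hset, measure_congr hIoc, Ioc_inter_Iic,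
    Real.volume_Ioc, sub_zero, inf_eq_right.2 (cdf_le_one ρ x), ofReal_cdf]

theorem integrableOn_quantileFun_cdf [IsProbabilityMeasure ρ] (h : Integrable id ρ) :
    IntegrableOn (quantileFun (cdf ρ)) (Ioo 0 1) := by
  rwa [← map_quantileFun_cdf ρ,
    integrable_map_measure aestronglyMeasurable_id (aemeasurable_quantileFun_cdf ρ)] at h

end Quantile

section DistFun

variable {Ω Ω' : Type*} [MeasurableSpace Ω] [MeasurableSpace Ω'] {ν : Measure Ω} {V Y G : Ω → ℝ}
  {u : ℝ}

theorem distFun_eq_cdf_map [IsProbabilityMeasure ν] (hV : Measurable V) :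
    distFun ν V = cdf (ν.map V) := by
  have := Measure.isProbabilityMeasure_map (μ := ν) hV.aemeasurable
  funext x
  rw [cdf_eq_real, map_measureReal_apply hV measurableSet_Iic]
  rfl

theorem ProbabilityTheory.IdentDistrib.distFun_eq {ν' : Measure Ω'} {V' : Ω' → ℝ}
    (h : IdentDistrib V V' ν ν') : distFun ν V = distFun ν' V' := by
  funext x
  simp only [distFun, ← Measure.map_apply_of_aemeasurable h.aemeasurable_fst measurableSet_Iic,
    ← Measure.map_apply_of_aemeasurable h.aemeasurable_snd measurableSet_Iic, h.map_eq]

theorem distFun_le_distFun_of_ae_le [IsFiniteMeasure ν] (h : ∀ᵐ x ∂ν, Y x ≤ G x) (x : ℝ) :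
    distFun ν G x ≤ distFun ν Y x :=
  ENNReal.toReal_mono (measure_ne_top _ _) (measure_mono_ae (h.mono fun _ h hG => h.trans hG))

theorem quantileFun_distFun_nonneg [IsProbabilityMeasure ν] (hV : Measurable V)
    (hV0 : ∀ x, 0 ≤ V x) (hu : u ∈ Ioo 0 1) : 0 ≤ quantileFun (distFun ν V) u := by
  rw [distFun_eq_cdf_map hV]
  have := Measure.isProbabilityMeasure_map (μ := ν) hV.aemeasurable
  refine quantileFun_cdf_nonneg _ ?_ hu
  rw [Measure.map_apply hV measurableSet_Iio,
    eq_empty_of_forall_notMem (s := V ⁻¹' Iio 0) fun x hx => (hV0 x).not_gt hx, measure_empty]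

theorem intervalIntegrable_quantileFun_distFun [IsProbabilityMeasure ν] (hV : Measurable V)
    (hi : Integrable V ν) {a : ℝ} (ha₀ : 0 ≤ a) (ha₁ : a ≤ 1) :
    IntervalIntegrable (quantileFun (distFun ν V)) volume a 1 := by
  have := Measure.isProbabilityMeasure_map (μ := ν) hV.aemeasurable
  rw [distFun_eq_cdf_map hV, intervalIntegrable_iff_integrableOn_Ioo_of_le ha₁]
  exact (integrableOn_quantileFun_cdf _ ((integrable_map_measure aestronglyMeasurable_id
    hV.aemeasurable).2 hi)).mono_set (Ioo_subset_Ioo_left ha₀)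

theorem quantileFun_distFun_mem_Icc [IsProbabilityMeasure ν] (hV : Measurable V)
    {g₁ g₂ : ℝ → ℝ} (hg₁ : Monotone g₁) (hg₁c : Continuous g₁) (hg₂ : Monotone g₂)
    (hg₂c : Continuous g₂) (hY : ∀ᵐ x ∂ν, g₁ (V x) ≤ Y x ∧ Y x ≤ g₂ (V x)) :
    MonotoneOn (quantileFun (distFun ν Y)) (Ioo 0 1) ∧ ∀ u ∈ Ioo 0 1,
      quantileFun (distFun ν Y) u ∈
        Icc (g₁ (quantileFun (distFun ν V) u)) (g₂ (quantileFun (distFun ν V) u)) := by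
  have := Measure.isProbabilityMeasure_map (μ := ν) hV.aemeasurable
  have hcdf : ∀ g : ℝ → ℝ, Continuous g →
      distFun ν (fun x => g (V x)) = cdf ((ν.map V).map g) := fun g hg => by
    rw [Measure.map_map hg.measurable hV, ← distFun_eq_cdf_map (hg.measurable.comp hV)]
    rfl
  have h₁ : ∀ x, distFun ν Y x ≤ cdf ((ν.map V).map g₁) x := fun x =>
    hcdf g₁ hg₁c ▸ distFun_le_distFun_of_ae_le (hY.mono fun _ h => h.1) x
  have h₂ : ∀ x, cdf ((ν.map V).map g₂) x ≤ distFun ν Y x := fun x =>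
    hcdf g₂ hg₂c ▸ distFun_le_distFun_of_ae_le (hY.mono fun _ h => h.2) x
  have hbdd : ∀ u : ℝ, 0 < u → BddBelow {x | u ≤ distFun ν Y x} := fun u hu =>
    (bddBelow_setOf_le_cdf _ hu).mono fun x hx => le_trans hx (h₁ x)
  have hne : ∀ u : ℝ, u < 1 → {x | u ≤ distFun ν Y x}.Nonempty := fun u hu =>
    (nonempty_setOf_le_cdf _ hu).mono fun x hx => le_trans hx (h₂ x)
  refine ⟨fun u hu u' hu' huu' => quantileFun_le_quantileFun huu' (fun _ => le_rfl)
    (hne u' hu'.2) (hbdd u hu.1), fun u hu => ⟨?_, ?_⟩⟩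
  · rw [distFun_eq_cdf_map hV, ← quantileFun_cdf_map _ hg₁ hg₁c hu]
    exact quantileFun_le_quantileFun le_rfl h₁ (hne u hu.2) (bddBelow_setOf_le_cdf _ hu.1)
  · rw [distFun_eq_cdf_map hV, ← quantileFun_cdf_map _ hg₂ hg₂c hu]
    exact quantileFun_le_quantileFun le_rfl h₂ (nonempty_setOf_le_cdf _ hu.2) (hbdd u hu.1)

end DistFun

section CondExpKernel

variable {Ω : Type*} {m m₁ : MeasurableSpace Ω} [mΩ : MeasurableSpace Ω] [StandardBorelSpace Ω]
  {μ : Measure Ω}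

theorem ae_ae_condExpKernel_of_ae [IsFiniteMeasure μ] (hm : m ≤ mΩ) {p : Ω → Prop}
    (h : ∀ᵐ x ∂μ, p x) :
    ∀ᵐ ω ∂μ, ∀ᵐ x ∂condExpKernel μ m ω, p x := by
  rw [← condExpKernel_comp_trim (μ := μ) hm] at h
  exact ae_of_ae_trim hm (Measure.ae_ae_of_ae_comp h)

theorem ae_ae_condExpKernel_eq_of_measurable [IsFiniteMeasure μ] (hm : m ≤ mΩ) {S : Ω → ℝ}
    (hS : Measurable[m] S) : ∀ᵐ ω ∂μ, ∀ᵐ x ∂condExpKernel μ m ω, S x = S ω := by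
  have hdiag : ∀ᵐ p ∂(μ.trim hm ⊗ₘ condExpKernel μ m), S p.2 = S p.1 := by
    rw [compProd_trim_condExpKernel hm]
    have hset : MeasurableSet[m.prod mΩ] {p : Ω × Ω | S p.2 = S p.1} :=
      measurableSet_eq_fun ((hS.mono hm le_rfl).comp measurable_snd) (hS.comp measurable_fst)
    have hdiag : @Measurable Ω (Ω × Ω) mΩ (m.prod mΩ) Function.diag :=
      @Measurable.prodMk Ω mΩ Ω Ω m mΩ id id (measurable_id'' hm) measurable_id
    exact (ae_map_iff (@Measurable.aemeasurable _ _ _ (m.prod mΩ) _ μ hdiag) hset).2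
      (ae_of_all _ fun _ => rfl)
  exact ae_of_ae_trim hm (Measure.ae_ae_of_ae_compProd hdiag)

theorem ae_condExpKernel_apply_eq_of_indep [IsFiniteMeasure μ] (hm : m ≤ mΩ) (hm₁ : m₁ ≤ mΩ)
    (hind : Indep m₁ m μ) {s : Set Ω} (hs : MeasurableSet[m₁] s) :
    ∀ᵐ ω ∂μ, condExpKernel μ m ω s = μ s := by
  have hsΩ := hm₁ _ hs
  filter_upwards [condExpKernel_ae_eq_condExp hm hsΩ,
    condExp_indep_eq hm₁ hm (f := s.indicator (1 : Ω → ℝ))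
      (stronglyMeasurable_const.indicator hs) hind] with ω h₁ h₂
  rw [← ENNReal.ofReal_toReal (measure_ne_top (condExpKernel μ m ω) s), ← measureReal_def,
    h₁.trans h₂, integral_indicator_one hsΩ, ofReal_measureReal]

theorem ae_condExpKernel_identDistrib [IsProbabilityMeasure μ] (hm : m ≤ mΩ) (hm₁ : m₁ ≤ mΩ)
    (hind : Indep m₁ m μ) {V : Ω → ℝ} (hV : Measurable[m₁] V) :
    ∀ᵐ ω ∂μ, IdentDistrib V V (condExpKernel μ m ω) μ := by
  have hVΩ : Measurable V := hV.mono hm₁ le_rfl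
  have hrat : ∀ᵐ ω ∂μ, ∀ q : ℚ,
      condExpKernel μ m ω (V ⁻¹' Iic (q : ℝ)) = μ (V ⁻¹' Iic (q : ℝ)) :=
    ae_all_iff.2 fun q => ae_condExpKernel_apply_eq_of_indep hm hm₁ hind (hV measurableSet_Iic)
  filter_upwards [hrat] with ω hω
  refine ⟨hVΩ.aemeasurable, hVΩ.aemeasurable, ext_of_generate_finite _
    (BorelSpace.measurable_eq.trans Real.borel_eq_generateFrom_Iic_rat) Real.isPiSystem_Iic_rat
    ?_ ?_⟩
  · simp only [mem_iUnion, mem_singleton_iff]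
    rintro _ ⟨q, rfl⟩
    rw [Measure.map_apply hVΩ measurableSet_Iic, Measure.map_apply hVΩ measurableSet_Iic, hω q]
  · simp [Measure.map_apply hVΩ MeasurableSet.univ]

variable [Nonempty Ω]

theorem condVaR_eq_quantileFun [IsFiniteMeasure μ] (u : ℝ) (Y : Ω → ℝ) (ω : Ω) :
    condVaR m μ u Y ω = quantileFun (distFun (condExpKernel μ m ω) Y) u := rfl

/-- Conditionally on `m`, `S` is frozen at its value `S ω` while `V` keeps its law. -/
theorem ae_condVaR_mem_Icc [IsProbabilityMeasure μ] (hm : m ≤ mΩ) (hm₁ : m₁ ≤ mΩ)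
    (hind : Indep m₁ m μ) {S V Y : Ω → ℝ} (hS : Measurable[m] S) (hV : Measurable[m₁] V)
    {g₁ g₂ : ℝ → ℝ → ℝ}
    (hg₁ : ∀ ω, Monotone (g₁ (S ω)) ∧ Continuous (g₁ (S ω)))
    (hg₂ : ∀ ω, Monotone (g₂ (S ω)) ∧ Continuous (g₂ (S ω)))
    (hY : ∀ᵐ x ∂μ, g₁ (S x) (V x) ≤ Y x ∧ Y x ≤ g₂ (S x) (V x)) :
    ∀ᵐ ω ∂μ, MonotoneOn (fun u => condVaR m μ u Y ω) (Ioo 0 1) ∧ ∀ u ∈ Ioo 0 1,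
      condVaR m μ u Y ω ∈ Icc (g₁ (S ω) (quantileFun (distFun μ V) u))
        (g₂ (S ω) (quantileFun (distFun μ V) u)) := by
  filter_upwards [ae_ae_condExpKernel_of_ae hm hY, ae_ae_condExpKernel_eq_of_measurable hm hS,
    ae_condExpKernel_identDistrib hm hm₁ hind hV] with ω hYω hSω hVω
  simp only [condVaR_eq_quantileFun, ← hVω.distFun_eq]
  refine quantileFun_distFun_mem_Icc (hV.mono hm₁ le_rfl) (hg₁ ω).1 (hg₁ ω).2 (hg₂ ω).1
    (hg₂ ω).2 ((hYω.and hSω).mono fun x ⟨h, hx⟩ => ?_)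
  rwa [hx] at h

end CondExpKernel

section TailMean

/-- `AVaR` at level `α` is the tail mean of `u ↦ VaR` at level `u`. -/
noncomputable def tailMean (α : ℝ) (f : ℝ → ℝ) : ℝ :=
  (1 - α)⁻¹ * ∫ u in α..1, f u

variable {α : ℝ} {f g lo hi : ℝ → ℝ}

theorem ae_restrict_uIoc_mem_Ioo {a b : ℝ} (hab : a ≤ b) :
    ∀ᵐ u ∂volume.restrict (uIoc a b), u ∈ Ioo a b := by
  rw [uIoc_of_le hab, ← Measure.restrict_congr_set Ioo_ae_eq_Ioc]
  exact ae_restrict_mem measurableSet_Ioo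

theorem tailMean_congr (hα : α ≤ 1) (h : EqOn f g (Ioo α 1)) : tailMean α f = tailMean α g := by
  rw [tailMean, tailMean,
    intervalIntegral.integral_congr_ae_restrict ((ae_restrict_uIoc_mem_Ioo hα).mono h)]

theorem tailMean_nonneg (hα : α ≤ 1) (h : ∀ u ∈ Ioo α 1, 0 ≤ f u) : 0 ≤ tailMean α f := by
  refine mul_nonneg (inv_nonneg.2 (sub_nonneg.2 hα)) ?_
  have := (ae_restrict_uIoc_mem_Ioo hα).mono h
  rw [uIoc_of_le hα] at this
  rw [intervalIntegral.integral_of_le hα]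
  exact setIntegral_nonneg_of_ae_restrict this

theorem tailMean_const_mul (c : ℝ) : tailMean α (fun u => c * f u) = c * tailMean α f := by
  rw [tailMean, tailMean, intervalIntegral.integral_const_mul, mul_left_comm]

theorem tailMean_const_add_mul (hα : α ≠ 1) (hf : IntervalIntegrable f volume α 1) (c d : ℝ) :
    tailMean α (fun u => c + d * f u) = c + d * tailMean α f := by
  rw [tailMean, tailMean, intervalIntegral.integral_add intervalIntegrable_const (hf.const_mul d),
    intervalIntegral.integral_const, intervalIntegral.integral_const_mul, smul_eq_mul]
  field_simp [sub_ne_zero.2 hα.symm]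

theorem IntervalIntegrable.sqrt {a b : ℝ} (hf : IntervalIntegrable f volume a b) :
    IntervalIntegrable (fun u => √(f u)) volume a b := by
  refine (hf.abs.add (intervalIntegrable_const (c := 1))).mono_fun
    (Real.continuous_sqrt.comp_aestronglyMeasurable hf.def'.aestronglyMeasurable)
    (ae_of_all _ fun u => ?_)
  simp only [Real.norm_eq_abs, abs_of_nonneg (Real.sqrt_nonneg _),
    abs_of_nonneg (add_nonneg (abs_nonneg (f u)) zero_le_one)]
  exact Real.sqrt_le_iff.2 ⟨by positivity, by nlinarith [abs_nonneg (f u), le_abs_self (f u)]⟩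

theorem intervalIntegrable_of_monotoneOn_of_mem_Icc {a b : ℝ} (hab : a ≤ b)
    (hf : MonotoneOn f (Ioo a b)) (hlo : IntervalIntegrable lo volume a b)
    (hhi : IntervalIntegrable hi volume a b) (h : ∀ u ∈ Ioo a b, f u ∈ Icc (lo u) (hi u)) :
    IntervalIntegrable f volume a b := by
  rw [intervalIntegrable_iff_integrableOn_Ioo_of_le hab] at hlo hhi ⊢
  refine (hlo.abs.add hhi.abs).mono'
    (aemeasurable_restrict_of_monotoneOn measurableSet_Ioo hf).aestronglyMeasurable ?_
  filter_upwards [ae_restrict_mem measurableSet_Ioo] with u hu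
  exact (abs_le_max_abs_abs (h u hu).1 (h u hu).2).trans
    (max_le_add_of_nonneg (abs_nonneg _) (abs_nonneg _))

theorem tailMean_mem_Icc (hα : α ≤ 1) (hf : MonotoneOn f (Ioo α 1))
    (hlo : IntervalIntegrable lo volume α 1) (hhi : IntervalIntegrable hi volume α 1)
    (h : ∀ u ∈ Ioo α 1, f u ∈ Icc (lo u) (hi u)) :
    tailMean α f ∈ Icc (tailMean α lo) (tailMean α hi) := by
  have hfi := intervalIntegrable_of_monotoneOn_of_mem_Icc hα hf hlo hhi h
  have hc : 0 ≤ (1 - α)⁻¹ := inv_nonneg.2 (sub_nonneg.2 hα)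
  exact ⟨mul_le_mul_of_nonneg_left (intervalIntegral.integral_mono_on_of_le_Ioo hα hlo hfi
      fun u hu => (h u hu).1) hc,
    mul_le_mul_of_nonneg_left (intervalIntegral.integral_mono_on_of_le_Ioo hα hfi hhi
      fun u hu => (h u hu).2) hc⟩

end TailMean

section LinQuadSandwich

variable {Ω : Type*} [MeasurableSpace Ω]

def LinQuadSandwich (μ : Measure Ω) (c : ℝ) (S X : Ω → ℝ) : Prop :=
  ∃ A B : ℝ, 0 ≤ B ∧ ∀ᵐ ω ∂μ, c * S ω ≤ X ω ∧ X ω ≤ A + B * S ω ^ 2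

theorem LinQuadSandwich.ae_le {μ : Measure Ω} {c : ℝ} {S X : Ω → ℝ}
    (h : LinQuadSandwich μ c S X) : ∀ᵐ ω ∂μ, c * S ω ≤ X ω :=
  let ⟨_, _, _, h⟩ := h
  h.mono fun _ hω => hω.1

end LinQuadSandwich

section Garch

variable {Ω : Type*} {m : MeasurableSpace Ω} [mΩ : MeasurableSpace Ω] [StandardBorelSpace Ω]
  [Nonempty Ω] {μ : Measure Ω} [IsProbabilityMeasure μ] {α : ℝ} {S W : Ω → ℝ}

theorem ae_tailMean_condVaR_mul_eq (hm : m ≤ mΩ) (hS : Measurable[m] S) (hS0 : ∀ ω, 0 ≤ S ω)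
    (hW : Measurable W) (hind : Indep (MeasurableSpace.comap W Real.measurableSpace) m μ)
    (hα : α ∈ Ioo 0 1) :
    ∀ᵐ ω ∂μ, tailMean α (fun u => condVaR m μ u (fun x => S x * W x) ω)
      = tailMean α (quantileFun (distFun μ W)) * S ω := by
  have hg : ∀ ω, Monotone (fun w => S ω * w) ∧ Continuous (fun w => S ω * w) :=
    fun ω => ⟨monotone_mul_left_of_nonneg (hS0 ω), continuous_const_mul (S ω)⟩
  filter_upwards [ae_condVaR_mem_Icc hm hW.comap_le hind hS (comap_measurable W)
    (g₁ := fun s w => s * w) (g₂ := fun s w => s * w) hg hg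
    (ae_of_all _ fun _ => ⟨le_rfl, le_rfl⟩)] with ω ⟨_, hω⟩
  rw [tailMean_congr hα.2.le fun u hu => le_antisymm (hω u ⟨hα.1.trans hu.1, hu.2⟩).2
    (hω u ⟨hα.1.trans hu.1, hu.2⟩).1, tailMean_const_mul, mul_comm]

theorem linQuadSandwich_tailMean_condVaR_mul (hm : m ≤ mΩ) (hS : Measurable[m] S)
    (hS0 : ∀ ω, 0 ≤ S ω) (hW : Measurable W)
    (hind : Indep (MeasurableSpace.comap W Real.measurableSpace) m μ) (hα : α ∈ Ioo 0 1)
    (hκ : 0 ≤ tailMean α (quantileFun (distFun μ W))) :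
    LinQuadSandwich μ (tailMean α (quantileFun (distFun μ W))) S
      (fun ω => tailMean α fun u => condVaR m μ u (fun x => S x * W x) ω) := by
  set κ := tailMean α (quantileFun (distFun μ W))
  refine ⟨κ, κ, hκ, (ae_tailMean_condVaR_mul_eq hm hS hS0 hW hind hα).mono fun ω hω => ?_⟩
  dsimp only
  rw [hω, mul_comm]
  refine ⟨le_rfl, ?_⟩
  nlinarith [mul_nonneg hκ (sq_nonneg (S ω - 1)), mul_nonneg hκ (sq_nonneg (S ω))]

theorem LinQuadSandwich.tailMean_condVaR (hm : m ≤ mΩ) (hS : Measurable[m] S)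
    (hS0 : ∀ ω, 0 ≤ S ω) (hW : Measurable W)
    (hind : Indep (MeasurableSpace.comap W Real.measurableSpace) m μ) {S' Y : Ω → ℝ}
    {a₀ a₁ b c : ℝ} (ha₀ : 0 ≤ a₀) (ha₁ : 0 ≤ a₁) (hb : 0 ≤ b) (hc : 0 ≤ c)
    (hS'0 : ∀ x, 0 ≤ S' x) (hS' : ∀ x, S' x ^ 2 = a₀ + S x ^ 2 * (a₁ * W x ^ 2 + b))
    (hα : α ∈ Ioo 0 1)
    (hq : IntervalIntegrable (quantileFun (distFun μ fun x => W x ^ 2)) volume α 1)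
    (hY : LinQuadSandwich μ c S' Y) :
    LinQuadSandwich μ
      (c * tailMean α fun u => √(a₁ * quantileFun (distFun μ fun x => W x ^ 2) u + b)) S
      (fun ω => tailMean α fun u => condVaR m μ u Y ω) := by
  obtain ⟨A, B, hB, hY⟩ := hY
  set q := quantileFun (distFun μ fun x => W x ^ 2)
  have hQ : 0 ≤ tailMean α q := tailMean_nonneg hα.2.le fun u hu =>
    quantileFun_distFun_nonneg (hW.pow_const 2) (fun _ => sq_nonneg _) ⟨hα.1.trans hu.1, hu.2⟩
  refine ⟨A + B * a₀, B * (b + a₁ * tailMean α q), by positivity, ?_⟩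
  have hsqrt : ∀ x, S x * √(a₁ * W x ^ 2 + b) ≤ S' x := fun x => calc
    S x * √(a₁ * W x ^ 2 + b) = √(S x ^ 2 * (a₁ * W x ^ 2 + b)) := by
      rw [Real.sqrt_mul (sq_nonneg _), Real.sqrt_sq (hS0 x)]
    _ ≤ √(S' x ^ 2) := Real.sqrt_le_sqrt (by rw [hS' x]; linarith)
    _ = S' x := Real.sqrt_sq (hS'0 x)
  have hg₁ : ∀ ω, Monotone (fun v => c * (S ω * √(a₁ * v + b))) ∧
      Continuous (fun v => c * (S ω * √(a₁ * v + b))) := fun ω =>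
    ⟨fun v w hvw => by dsimp only; have := hS0 ω; gcongr, by fun_prop⟩
  have hg₂ : ∀ ω, Monotone (fun v => A + B * (a₀ + S ω ^ 2 * (a₁ * v + b))) ∧
      Continuous (fun v => A + B * (a₀ + S ω ^ 2 * (a₁ * v + b))) := fun ω =>
    ⟨fun v w hvw => by dsimp only; gcongr, by fun_prop⟩
  filter_upwards [ae_condVaR_mem_Icc hm hW.comap_le hind hS ((comap_measurable W).pow_const 2)
    (g₁ := fun s v => c * (s * √(a₁ * v + b)))
    (g₂ := fun s v => A + B * (a₀ + s ^ 2 * (a₁ * v + b))) hg₁ hg₂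
    (hY.mono fun x hx => ⟨(mul_le_mul_of_nonneg_left (hsqrt x) hc).trans hx.1,
      hx.2.trans_eq (by rw [hS' x])⟩)] with ω ⟨hmono, hIcc⟩
  have hlo : (fun u => c * (S ω * √(a₁ * q u + b))) = fun u => c * S ω * √(a₁ * q u + b) :=
    funext fun u => (mul_assoc _ _ _).symm
  have hhi : (fun u => A + B * (a₀ + S ω ^ 2 * (a₁ * q u + b)))
      = fun u => (A + B * a₀ + B * b * S ω ^ 2) + B * a₁ * S ω ^ 2 * q u :=
    funext fun u => by ring
  obtain ⟨h₁, h₂⟩ := tailMean_mem_Icc hα.2.le (hmono.mono (Ioo_subset_Ioo_left hα.1.le))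
    (hlo ▸ ((hq.const_mul a₁).add intervalIntegrable_const).sqrt.const_mul (c * S ω))
    (hhi ▸ intervalIntegrable_const.add (hq.const_mul _))
    fun u hu => hIcc u ⟨hα.1.trans hu.1, hu.2⟩
  rw [hlo, tailMean_const_mul] at h₁
  rw [hhi, tailMean_const_add_mul hα.2.ne hq] at h₂
  exact ⟨by linarith, by linarith⟩

end Garch

theorem timeConsistent_AVaR_lower_bound_general {Ω : Type*} [mΩ : MeasurableSpace Ω]
    [StandardBorelSpace Ω] [Nonempty Ω] (μ : Measure Ω) [IsProbabilityMeasure μ]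
    (ℱ : ℕ → MeasurableSpace Ω) (hℱ : ∀ t, ℱ t ≤ mΩ)
    (T : ℕ) (a₀ a₁ b : ℝ) (ha₀ : 0 < a₀) (ha₁ : 0 < a₁) (hb : 0 < b)
    (L σ Z : ℕ → Ω → ℝ)
    -- GARCH(1,1) dynamics
    (hL : ∀ t, 1 ≤ t → t ≤ T → ∀ ω, L t ω = σ t ω * Z t ω)
    (hσrec : ∀ t, 1 ≤ t → t ≤ T → ∀ ω,
      σ t ω ^ 2 = a₀ + a₁ * L (t - 1) ω ^ 2 + b * σ (t - 1) ω ^ 2)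
    (hσmeas : ∀ t, Measurable[ℱ t] (σ (t + 1))) (hσpos : ∀ t ω, 0 < σ t ω)
    (hZmeas : ∀ t, Measurable (Z t))
    -- innovations independent of the past
    (hindep : ∀ t, Indep (MeasurableSpace.comap (Z (t + 1)) Real.measurableSpace) (ℱ t) μ)
    -- identically distributed, symmetric innovations with nice distribution function
    (hident : ∀ t, 1 ≤ t → t ≤ T → μ.map (Z t) = μ.map (Z 1))
    (α : ℝ) (hα : α ∈ Set.Ioo (0 : ℝ) 1) (hqpos : 0 < quantileFun (distFun μ (Z 1)) α)
    (hZ2int : Integrable (fun ω => Z 1 ω ^ 2) μ)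
    -- time-consistent AVaR defined by backward recursion
    (AV : ℕ → (Ω → ℝ) → Ω → ℝ)
    (hAVT : ∀ X : Ω → ℝ, AV T X = X)
    (hAVrec : ∀ t, t < T → ∀ X : Ω → ℝ, ∀ ω,
      AV t X ω = (1 - α)⁻¹ * ∫ u in α..(1 : ℝ), condVaR (ℱ t) μ u (AV (t + 1) X) ω)
    (κ : ℝ)
    (hκ : κ = (1 - α)⁻¹ * ∫ u in α..(1 : ℝ), quantileFun (distFun μ (Z 1)) u) :
    ∀ t, t < T → ∀ᵐ ω ∂μ,
      κ * ((1 - α)⁻¹ * ∫ y in α..(1 : ℝ),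
              Real.sqrt (a₁ * quantileFun (distFun μ (fun ω' => Z 1 ω' ^ 2)) y + b)) ^ (T - t - 1)
          * σ (t + 1) ω
        ≤ AV t (L T) ω := by
  obtain ⟨hα0, hα1⟩ := hα
  have hlaw : ∀ t, t < T → distFun μ (Z (t + 1)) = distFun μ (Z 1) ∧
      distFun μ (fun x => Z (t + 1) x ^ 2) = distFun μ (fun x => Z 1 x ^ 2) := fun t ht =>
    have h : IdentDistrib (Z (t + 1)) (Z 1) μ μ :=
      ⟨(hZmeas _).aemeasurable, (hZmeas 1).aemeasurable, hident _ (by omega) (by omega)⟩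
    ⟨h.distFun_eq, (h.comp (measurable_id.pow_const 2)).distFun_eq⟩
  have hκ0 : 0 ≤ κ := by
    rw [distFun_eq_cdf_map (hZmeas 1)] at hqpos hκ
    rw [hκ]
    exact tailMean_nonneg hα1.le fun u hu => hqpos.le.trans
      (monotoneOn_quantileFun_cdf _ ⟨hα0, hα1⟩ ⟨hα0.trans hu.1, hu.2⟩ hu.1.le)
  have hq := intervalIntegrable_quantileFun_distFun ((hZmeas 1).pow_const 2) hZ2int hα0.le hα1.le
  -- the quadratic upper bound carried along keeps every conditional VaR profile integrable
  have key : ∀ k t, t + k + 1 = T → LinQuadSandwich μ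
      (κ * (tailMean α fun y => √(a₁ * quantileFun (distFun μ fun x => Z 1 x ^ 2) y + b)) ^ k)
      (σ (t + 1)) (AV t (L T)) := by
    intro k
    induction k with
    | zero =>
      intro t ht
      obtain rfl : T = t + 1 := by omega
      have hAV : AV t (L (t + 1)) = fun ω => tailMean α fun u =>
          condVaR (ℱ t) μ u (fun x => σ (t + 1) x * Z (t + 1) x) ω := by
        funext ω
        rw [hAVrec t (by omega), hAVT, funext (hL _ (by omega) le_rfl)]
        rfl
      have hκZ : κ = tailMean α (quantileFun (distFun μ (Z (t + 1)))) := by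
        rw [(hlaw t (by omega)).1]
        exact hκ
      rw [hAV, pow_zero, mul_one, hκZ]
      exact linQuadSandwich_tailMean_condVaR_mul (hℱ t) (hσmeas t) (fun ω => (hσpos _ ω).le)
        (hZmeas _) (hindep t) ⟨hα0, hα1⟩ (hκZ ▸ hκ0)
    | succ k ih =>
      intro t ht
      have hσsq : ∀ x,
          σ (t + 1 + 1) x ^ 2 = a₀ + σ (t + 1) x ^ 2 * (a₁ * Z (t + 1) x ^ 2 + b) := fun x => by
        rw [hσrec (t + 1 + 1) (by omega) (by omega), Nat.add_sub_cancel,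
          hL (t + 1) (by omega) (by omega)]
        ring
      have hstep := (ih (t + 1) (by omega)).tailMean_condVaR (hℱ t) (hσmeas t)
        (fun ω => (hσpos _ ω).le) (hZmeas _) (hindep t) ha₀.le ha₁.le hb.le
        (mul_nonneg hκ0 (pow_nonneg (tailMean_nonneg hα1.le fun _ _ => Real.sqrt_nonneg _) k))
        (fun x => (hσpos _ x).le) hσsq ⟨hα0, hα1⟩ (by rwa [(hlaw t (by omega)).2])
      rw [(hlaw t (by omega)).2, mul_assoc, ← pow_succ] at hstep
      rwa [funext (hAVrec t (by omega) (L T))]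
  exact fun t ht => (key (T - t - 1) t (by omega)).ae_le

/-- Lower bound for the time-consistent Average Value-at-Risk of the terminal GARCH(1,1) loss:
`ÃVaR^α_t(L_T) ≥ κ ((1/(1−α)) ∫_α^1 √(a₁ F_{Z²}^{-1}(y) + b) dy)^{T-t-1} σ_{t+1}`
with `κ = (1/(1−α)) ∫_α^1 F_Z^{-1}(u) du`. -/
theorem timeConsistent_AVaR_lower_bound {Ω : Type*} [mΩ : MeasurableSpace Ω]
    [StandardBorelSpace Ω] [Nonempty Ω] (μ : Measure Ω) [IsProbabilityMeasure μ]
    (ℱ : ℕ → MeasurableSpace Ω) (hℱ : ∀ t, ℱ t ≤ mΩ) (hmonoℱ : Monotone ℱ)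
    (T : ℕ) (a₀ a₁ b : ℝ) (ha₀ : 0 < a₀) (ha₁ : 0 < a₁) (hb : 0 < b)
    (L σ Z : ℕ → Ω → ℝ)
    -- GARCH(1,1) dynamics
    (hL : ∀ t, 1 ≤ t → t ≤ T → ∀ ω, L t ω = σ t ω * Z t ω)
    (hσrec : ∀ t, 1 ≤ t → t ≤ T → ∀ ω,
      σ t ω ^ 2 = a₀ + a₁ * L (t - 1) ω ^ 2 + b * σ (t - 1) ω ^ 2)
    (hσmeas : ∀ t, Measurable[ℱ t] (σ (t + 1))) (hσpos : ∀ t ω, 0 < σ t ω)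
    (hZmeas : ∀ t, Measurable (Z t))
    -- innovations independent of the past
    (hindep : ∀ t, Indep (MeasurableSpace.comap (Z (t + 1)) Real.measurableSpace) (ℱ t) μ)
    -- identically distributed, symmetric innovations with nice distribution function
    (hident : ∀ t, 1 ≤ t → t ≤ T → μ.map (Z t) = μ.map (Z 1))
    (hsym : μ.map (Z 1) = μ.map (fun ω => -(Z 1 ω)))
    (hmono : StrictMono (distFun μ (Z 1))) (hcont : Continuous (distFun μ (Z 1)))
    (α : ℝ) (hα : α ∈ Set.Ioo (0 : ℝ) 1) (hqpos : 0 < quantileFun (distFun μ (Z 1)) α)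
    (hZ2int : Integrable (fun ω => Z 1 ω ^ 2) μ)
    -- time-consistent AVaR defined by backward recursion
    (AV : ℕ → (Ω → ℝ) → Ω → ℝ)
    (hAVT : ∀ X : Ω → ℝ, AV T X = X)
    (hAVrec : ∀ t, t < T → ∀ X : Ω → ℝ, ∀ ω,
      AV t X ω = (1 - α)⁻¹ * ∫ u in α..(1 : ℝ), condVaR (ℱ t) μ u (AV (t + 1) X) ω)
    (κ : ℝ)
    (hκ : κ = (1 - α)⁻¹ * ∫ u in α..(1 : ℝ), quantileFun (distFun μ (Z 1)) u) :
    ∀ t, t < T → ∀ᵐ ω ∂μ,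
      κ * ((1 - α)⁻¹ * ∫ y in α..(1 : ℝ),
              Real.sqrt (a₁ * quantileFun (distFun μ (fun ω' => Z 1 ω' ^ 2)) y + b)) ^ (T - t - 1)
          * σ (t + 1) ω
        ≤ AV t (L T) ω :=
  timeConsistent_AVaR_lower_bound_general (mΩ := mΩ) μ ℱ hℱ T a₀ a₁ b ha₀ ha₁ hb L σ Z hL hσrec
    hσmeas hσpos hZmeas hindep hident α hα hqpos hZ2int AV hAVT hAVrec κ hκ
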